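/- Let G=(V,E) be a finite graph with nonnegative vertex weights w, and suppose G has arboricity at most α (its edges partition into α forests), where α ≥ 1. Then there exists an independent set X ⊆ V with 4α·w(X) ≥ w(V). -/

import Mathlib

open SimpleGraph Finset

/-- A forest (on a nonempty finite vertex type) has at most `card W - 1` edges;
stated for an arbitrary finset of edges of the forest. -/
lemma forest_edge_bound {W : Type*} [Fintype W] [Nonempty W] {H : SimpleGraph W}
    (hH : H.IsAcyclic) (E : Finset (Sym2 W)) (hE : ∀ e ∈ E, e ∈ H.edgeSet) :
    E.card ≤ Fintype.card W - 1 := by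
  classical
  -- roots of connected components
  set root : W → W := fun v => Quot.out (H.connectedComponentMk v) with hrootdef
  have hmkroot : ∀ v, H.connectedComponentMk (root v) = H.connectedComponentMk v := by
    intro v
    exact Quot.out_eq _
  have hreach : ∀ v, H.Reachable v (root v) := fun v =>
    (ConnectedComponent.exact (hmkroot v)).symm
  have hrootadj : ∀ {x y}, H.Adj x y → root y = root x := by
    intro x y hxy
    simp only [hrootdef]
    rw [ConnectedComponent.connectedComponentMk_eq_of_adj hxy]
  have hrootidem : ∀ v, root (root v) = root v := by
    intro v
    simp only [hrootdef]
    rw [hmkroot v]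
  -- choose the unique path to the root
  have hex : ∀ v, ∃ q : H.Walk v (root v), q.IsPath := by
    intro v
    obtain ⟨q⟩ := hreach v
    exact ⟨q.toPath.1, q.toPath.2⟩
  choose p hp using hex
  set d : W → ℕ := fun v => (p v).length with hd
  have huniq : ∀ {a b : W} (q₁ q₂ : H.Walk a b), q₁.IsPath → q₂.IsPath → q₁ = q₂ := by
    intro a b q₁ q₂ h₁ h₂
    exact Subtype.mk_eq_mk.mp (hH.path_unique ⟨q₁, h₁⟩ ⟨q₂, h₂⟩)
  have hzero : ∀ v, root v = v → d v = 0 := by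
    intro v hv
    have h1 : ((p v).copy rfl hv).IsPath := by rw [Walk.isPath_copy]; exact hp v
    have h2 : (p v).copy rfl hv = Walk.nil := Walk.isPath_iff_eq_nil.mp h1
    have h3 := congrArg Walk.length h2
    simpa [hd] using h3
  -- key dichotomy along edges
  have hmain : ∀ {x y} (hxy : H.Adj x y),
      (d x = d y + 1 ∧ (p x).getVert 1 = y) ∨ (d y = d x + 1 ∧ (p y).getVert 1 = x) := by
    have key : ∀ {x y} (hxy : H.Adj x y), y ∈ (p x).support →
        d x = d y + 1 ∧ (p x).getVert 1 = y := by
      intro x y hxy hmem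
      have hr : root y = root x := hrootadj hxy
      have htake : (p x).takeUntil y hmem = Walk.cons hxy Walk.nil := by
        apply huniq _ _ ((hp x).takeUntil hmem)
        simp [Walk.cons_isPath_iff, hxy.ne]
      have hdrop : (p x).dropUntil y hmem = (p y).copy rfl hr := by
        apply huniq _ _ ((hp x).dropUntil hmem)
        simp [hp y]
      have hspec := (p x).take_spec hmem
      rw [htake, hdrop] at hspec
      have hpx : p x = Walk.cons hxy ((p y).copy rfl hr) := by
        rw [← hspec]; simp
      constructor
      · have := congrArg Walk.length hpx
        simpa [hd, Nat.add_comm] using this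
      · rw [hpx]; simp [Walk.getVert_cons_succ]
    intro x y hxy
    by_cases hmem : y ∈ (p x).support
    · exact Or.inl (key hxy hmem)
    · right
      have hr : root y = root x := hrootadj hxy
      have hcons : ((Walk.cons hxy.symm (p x)).copy rfl hr.symm).IsPath := by
        simp only [Walk.isPath_copy]
        exact (hp x).cons hmem
      have := huniq _ _ (hp y) hcons
      constructor
      · have := congrArg Walk.length this
        simpa [hd, Nat.add_comm] using this
      · rw [this]
        simp [Walk.getVert_copy, Walk.getVert_cons_succ]
  -- the map sending each edge to its endpoint farther from the root
  set g : Sym2 W → W := fun e =>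
    if d (Quot.out e).2 < d (Quot.out e).1 then (Quot.out e).1 else (Quot.out e).2 with hg
  have hgood : ∀ e ∈ E, 1 ≤ d (g e) ∧ e = s(g e, (p (g e)).getVert 1) := by
    intro e he
    have hout : s((Quot.out e).1, (Quot.out e).2) = e := by
      have := Quot.out_eq e
      exact this
    have hadj : H.Adj (Quot.out e).1 (Quot.out e).2 := by
      rw [← mem_edgeSet, hout]
      exact hE e he
    set x := (Quot.out e).1
    set y := (Quot.out e).2
    rcases hmain hadj with ⟨h1, h2⟩ | ⟨h1, h2⟩
    · have hlt : d y < d x := by omega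
      have : g e = x := by simp only [hg]; exact if_pos hlt
      rw [this]
      exact ⟨by omega, by rw [h2, hout]⟩
    · have hlt : ¬ d y < d x := by omega
      have : g e = y := by simp only [hg]; exact if_neg hlt
      rw [this]
      refine ⟨by omega, ?_⟩
      rw [h2, ← hout, Sym2.eq_swap]
  -- the image avoids the root of a fixed component
  obtain ⟨v0⟩ := ‹Nonempty W›
  have havoid : ∀ e ∈ E, g e ∈ Finset.univ.erase (root v0) := by
    intro e he
    rw [Finset.mem_erase]
    refine ⟨?_, Finset.mem_univ _⟩
    intro hcontra
    have h0 : root (root v0) = root v0 := hrootidem v0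
    have := hzero (root v0) h0
    have h1 := (hgood e he).1
    rw [hcontra] at h1
    omega
  have hinj : Set.InjOn g E := by
    intro e1 h1 e2 h2 hgeq
    have e1eq := (hgood e1 h1).2
    have e2eq := (hgood e2 h2).2
    rw [e1eq, e2eq, hgeq]
  calc E.card ≤ (Finset.univ.erase (root v0)).card :=
        Finset.card_le_card_of_injOn g havoid hinj
    _ = Fintype.card W - 1 := by
        rw [Finset.card_erase_of_mem (Finset.mem_univ _), Finset.card_univ]

/-- `G` has arboricity at most `k`: its edges can be partitioned into `k` forests. -/
def ArboricityLE {V : Type*} (G : SimpleGraph V) (k : ℕ) : Prop :=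
  ∃ f : Sym2 V → Fin k,
    ∀ i : Fin k, (SimpleGraph.fromEdgeSet {e | e ∈ G.edgeSet ∧ f e = i}).IsAcyclic

lemma arb_min_degree {V : Type*} [Fintype V] (G : SimpleGraph V) [DecidableRel G.Adj]
    {α : ℕ} (hα : 1 ≤ α) (harb : ArboricityLE G α) (S : Finset V) (hS : S.Nonempty) :
    ∃ v ∈ S, (S.filter (G.Adj v)).card < 2 * α := by
  classical
  obtain ⟨f, hf⟩ := harb
  haveI : Nonempty {x // x ∈ S} := by obtain ⟨v, hv⟩ := hS; exact ⟨⟨v, hv⟩⟩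
  set H : SimpleGraph {x // x ∈ S} := G.comap Subtype.val with hHdef
  have hHadj : ∀ a b : {x // x ∈ S}, H.Adj a b ↔ G.Adj ↑a ↑b := fun a b => Iff.rfl
  -- edge bound for the induced subgraph
  have hedge : H.edgeFinset.card ≤ α * (S.card - 1) := by
    have hcard : H.edgeFinset.card =
        ∑ i : Fin α, (H.edgeFinset.filter
          (fun e => f (Sym2.map Subtype.val e) = i)).card :=
      Finset.card_eq_sum_card_fiberwise (fun e _ => Finset.mem_univ _)
    rw [hcard]
    have hbound : ∀ i : Fin α,
        (H.edgeFinset.filter (fun e => f (Sym2.map Subtype.val e) = i)).card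
          ≤ S.card - 1 := by
      intro i
      set Ki := SimpleGraph.fromEdgeSet
        {e : Sym2 {x // x ∈ S} | e ∈ H.edgeSet ∧ f (Sym2.map Subtype.val e) = i} with hKi
      set Gi := SimpleGraph.fromEdgeSet {e | e ∈ G.edgeSet ∧ f e = i} with hGi
      have hhom : ∀ a b : {x // x ∈ S}, Ki.Adj a b → Gi.Adj ↑a ↑b := by
        intro a b hab
        rw [hKi, fromEdgeSet_adj] at hab
        rw [hGi, fromEdgeSet_adj]
        obtain ⟨⟨h1, h2⟩, h3⟩ := hab
        rw [mem_edgeSet, hHadj] at h1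
        refine ⟨⟨?_, ?_⟩, h1.ne⟩
        · rw [mem_edgeSet]; exact h1
        · simpa using h2
      have hKacyc : Ki.IsAcyclic := by
        intro v c hc
        let φ : Ki →g Gi := { toFun := Subtype.val, map_rel' := fun {a b} h => hhom a b h }
        exact hf i (c.map φ)
          ((Walk.map_isCycle_iff_of_injective (Subtype.val_injective)).mpr hc)
      have happ := forest_edge_bound hKacyc
        (H.edgeFinset.filter (fun e => f (Sym2.map Subtype.val e) = i)) ?_
      · simpa [Fintype.card_coe] using happ
      · intro e he
        rw [Finset.mem_filter, mem_edgeFinset] at he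
        rw [hKi, edgeSet_fromEdgeSet, Set.mem_diff]
        exact ⟨⟨he.1, he.2⟩, H.not_isDiag_of_mem_edgeSet he.1⟩
    calc ∑ i : Fin α, (H.edgeFinset.filter
          (fun e => f (Sym2.map Subtype.val e) = i)).card
        ≤ ∑ _i : Fin α, (S.card - 1) := Finset.sum_le_sum (fun i _ => hbound i)
      _ = α * (S.card - 1) := by
          rw [Finset.sum_const, Finset.card_univ, Fintype.card_fin, smul_eq_mul]
  have hsum : ∑ v : {x // x ∈ S}, H.degree v = 2 * H.edgeFinset.card :=
    H.sum_degrees_eq_twice_card_edges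
  by_contra hcon
  push_neg at hcon
  have hdeg : ∀ v : {x // x ∈ S}, 2 * α ≤ H.degree v := by
    intro v
    have hveq : H.degree v = (S.filter (G.Adj ↑v)).card := by
      rw [SimpleGraph.degree]
      apply Finset.card_bij (fun (u : {x // x ∈ S}) _ => (u : V))
      · intro u hu
        rw [Finset.mem_filter]
        exact ⟨u.2, (H.mem_neighborFinset v u).mp hu⟩
      · intro u _ u' _ h
        exact Subtype.val_injective h
      · intro w hw
        rw [Finset.mem_filter] at hw
        exact ⟨⟨w, hw.1⟩, (H.mem_neighborFinset v _).mpr hw.2, rfl⟩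
    rw [hveq]
    exact hcon ↑v v.2
  have h1 : 2 * (α * S.card) ≤ ∑ v : {x // x ∈ S}, H.degree v := by
    calc 2 * (α * S.card) = ∑ _v : {x // x ∈ S}, 2 * α := by
          rw [Finset.sum_const, Finset.card_univ, Fintype.card_coe, smul_eq_mul]; ring
      _ ≤ _ := Finset.sum_le_sum (fun v _ => hdeg v)
  have h2 : 1 ≤ S.card := hS.card_pos
  have h3 : α * S.card = α * (S.card - 1) + α := by
    obtain ⟨m, hm⟩ : ∃ m, S.card = m + 1 := ⟨S.card - 1, by omega⟩
    rw [hm]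
    simp [Nat.mul_succ]
  omega

lemma exists_greedy_coloring {V : Type*} (G : SimpleGraph V) [DecidableRel G.Adj] {k : ℕ}
    (hk : 0 < k) (hmin : ∀ S : Finset V, S.Nonempty → ∃ v ∈ S, (S.filter (G.Adj v)).card < k) :
    ∀ S : Finset V, ∃ c : V → Fin k, ∀ u ∈ S, ∀ v ∈ S, G.Adj u v → c u ≠ c v := by
  classical
  intro S
  induction S using Finset.strongInduction with
  | _ S ih =>
    rcases S.eq_empty_or_nonempty with rfl | hS
    · exact ⟨fun _ => ⟨0, hk⟩, by simp⟩
    · obtain ⟨v, hv, hdeg⟩ := hmin S hS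
      obtain ⟨c, hc⟩ := ih (S.erase v) (Finset.erase_ssubset hv)
      set N := ((S.erase v).filter (G.Adj v)).image c with hN
      have hNcard : N.card < Fintype.card (Fin k) := by
        calc N.card ≤ ((S.erase v).filter (G.Adj v)).card := Finset.card_image_le
          _ ≤ (S.filter (G.Adj v)).card :=
              Finset.card_le_card (Finset.filter_subset_filter _ (Finset.erase_subset _ _))
          _ < k := hdeg
          _ = Fintype.card (Fin k) := (Fintype.card_fin k).symm
      have hcompl : (Nᶜ : Finset (Fin k)).Nonempty := by
        rw [← Finset.card_pos, Finset.card_compl]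
        omega
      obtain ⟨i, hi'⟩ := hcompl
      have hi : i ∉ N := Finset.mem_compl.mp hi'
      refine ⟨Function.update c v i, ?_⟩
      intro u hu u' hu' hadj
      by_cases h1 : u = v <;> by_cases h2 : u' = v
      · subst h1; subst h2; exact absurd hadj (G.irrefl)
      · subst h1
        rw [Function.update_self, Function.update_of_ne h2]
        intro hcontra
        have hmem : c u' ∈ N := hN ▸ Finset.mem_image_of_mem c
          (Finset.mem_filter.mpr ⟨Finset.mem_erase.mpr ⟨h2, hu'⟩, hadj⟩)
        rw [← hcontra] at hmem
        exact hi hmem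
      · subst h2
        rw [Function.update_self, Function.update_of_ne h1]
        intro hcontra
        have : c u ∈ N := hN ▸ Finset.mem_image_of_mem c
          (Finset.mem_filter.mpr ⟨Finset.mem_erase.mpr ⟨h1, hu⟩, hadj.symm⟩)
        rw [hcontra] at this
        exact hi this
      · rw [Function.update_of_ne h1, Function.update_of_ne h2]
        exact hc u (Finset.mem_erase.mpr ⟨h1, hu⟩) u' (Finset.mem_erase.mpr ⟨h2, hu'⟩) hadj

theorem stmt_6 {V : Type*} [Fintype V] (G : SimpleGraph V)
    (w : V → ℝ) (hw : ∀ v, 0 ≤ w v) (α : ℕ) (hα : 1 ≤ α)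
    (harb : ArboricityLE G α) :
    ∃ X : Finset V, (∀ u ∈ X, ∀ v ∈ X, ¬ G.Adj u v) ∧
      ∑ v : V, w v ≤ 4 * (α : ℝ) * ∑ v ∈ X, w v := by
  classical
  haveI : DecidableRel G.Adj := Classical.decRel _
  have hk : 0 < 2 * α := by omega
  obtain ⟨c, hc⟩ := exists_greedy_coloring G hk
    (fun S hS => arb_min_degree G hα harb S hS) Finset.univ
  -- pick the heaviest color class
  have hne : (Finset.univ : Finset (Fin (2 * α))).Nonempty := by
    haveI : NeZero (2 * α) := ⟨by omega⟩
    exact Finset.univ_nonempty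
  obtain ⟨i0, _, hi0⟩ := Finset.exists_max_image Finset.univ
    (fun i => ∑ v ∈ Finset.univ.filter (fun v => c v = i), w v) hne
  set X := Finset.univ.filter (fun v => c v = i0) with hX
  refine ⟨X, ?_, ?_⟩
  · intro u hu v hv hadj
    rw [hX, Finset.mem_filter] at hu hv
    exact hc u (Finset.mem_univ u) v (Finset.mem_univ v) hadj (hu.2.trans hv.2.symm)
  · have hfib : ∑ v : V, w v =
        ∑ i : Fin (2 * α), ∑ v ∈ Finset.univ.filter (fun v => c v = i), w v :=
      (Finset.sum_fiberwise Finset.univ c w).symm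
    have hXnn : 0 ≤ ∑ v ∈ X, w v := Finset.sum_nonneg (fun v _ => hw v)
    have h1 : ∑ v : V, w v ≤ (2 * α : ℕ) * ∑ v ∈ X, w v := by
      rw [hfib]
      calc ∑ i : Fin (2 * α), ∑ v ∈ Finset.univ.filter (fun v => c v = i), w v
          ≤ ∑ _i : Fin (2 * α), ∑ v ∈ X, w v :=
            Finset.sum_le_sum (fun i _ => hi0 i (Finset.mem_univ i))
        _ = (2 * α : ℕ) * ∑ v ∈ X, w v := by
            rw [Finset.sum_const, Finset.card_univ, Fintype.card_fin, nsmul_eq_mul]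
    calc ∑ v : V, w v ≤ (2 * α : ℕ) * ∑ v ∈ X, w v := h1
      _ ≤ 4 * (α : ℝ) * ∑ v ∈ X, w v := by
          apply mul_le_mul_of_nonneg_right _ hXnn
          push_cast
          have : (1 : ℝ) ≤ (α : ℝ) := by exact_mod_cast hα
          nlinarith
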